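/- arXiv:1303.2259 — 2 statements merged into one kernel-verified Lean document; each statement's English description precedes it below -/
import Mathlib

section
/- ∫₀¹ K'(k)³ dk = (10/3)·∫₀¹ K(k)³ dk, where K is the complete elliptic integral of the first kind and K'(k) = K(√(1−k²)). -/
noncomputable def EllK (k : ℝ) : ℝ := ∫ u in (0:ℝ)..1, 1 / Real.sqrt ((1 - u^2) * (1 - k^2 * u^2))

noncomputable def EllK' (k : ℝ) : ℝ := EllK (Real.sqrt (1 - k^2))

/-!
Write `k' = √(1 - k²)`. The substitution `κ = k'` turns `∫₀¹ K³` into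
`A = ∫₀¹ (k / k') K'(k)³ dk`. Landen's transformation `K'(k₁) = (1 + k') K'(k)` for
`k₁ = (1 - k') / (1 + k')`, used as the substitution `k ↦ k₁` of `(0, 1)` onto itself, turns
`∫₀¹ K'³` into `2A + 2D` and `D = ∫₀¹ k K'(k)³ dk` into `2A - 2D`; hence `3D = 2A` and
`∫₀¹ K'³ = (10/3) A`. All integrands are nonnegative, so these identities are proved for lower
Lebesgue integrals in `[0, ∞]`, where additivity needs no finiteness estimate for `K`.
-/

open Real MeasureTheory Set
open scoped ENNReal

section ChangeOfVariables

variable {f f' : ℝ → ℝ} {a b : ℝ}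

theorem strictMonoOn_Icc_of_hasDerivAt_pos (hf : ContinuousOn f (Icc a b))
    (hf' : ∀ x ∈ Ioo a b, HasDerivAt f (f' x) x) (hpos : ∀ x ∈ Ioo a b, 0 < f' x) :
    StrictMonoOn f (Icc a b) :=
  strictMonoOn_of_hasDerivWithinAt_pos (convex_Icc a b) hf
    (by simpa only [interior_Icc] using fun x hx => (hf' x hx).hasDerivWithinAt)
    (by simpa only [interior_Icc] using hpos)

theorem strictAntiOn_Icc_of_hasDerivAt_neg (hf : ContinuousOn f (Icc a b))
    (hf' : ∀ x ∈ Ioo a b, HasDerivAt f (f' x) x) (hneg : ∀ x ∈ Ioo a b, f' x < 0) :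
    StrictAntiOn f (Icc a b) :=
  strictAntiOn_of_hasDerivWithinAt_neg (convex_Icc a b) hf
    (by simpa only [interior_Icc] using fun x hx => (hf' x hx).hasDerivWithinAt)
    (by simpa only [interior_Icc] using hneg)

theorem setIntegral_Ioo_comp_of_deriv_pos (hab : a ≤ b) (hf : ContinuousOn f (Icc a b))
    (hf' : ∀ x ∈ Ioo a b, HasDerivAt f (f' x) x) (hpos : ∀ x ∈ Ioo a b, 0 < f' x)
    (g : ℝ → ℝ) :
    ∫ y in Ioo (f a) (f b), g y = ∫ x in Ioo a b, f' x * g (f x) := by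
  have hmono := strictMonoOn_Icc_of_hasDerivAt_pos hf hf' hpos
  rw [← hf.image_Ioo_of_strictMonoOn hab hmono,
    integral_image_eq_integral_abs_deriv_smul measurableSet_Ioo
      (fun x hx => (hf' x hx).hasDerivWithinAt) (hmono.injOn.mono Ioo_subset_Icc_self)]
  exact setIntegral_congr_fun measurableSet_Ioo fun x hx => by
    rw [abs_of_pos (hpos x hx), smul_eq_mul]

theorem lintegral_Ioo_comp_of_deriv_pos (hab : a ≤ b) (hf : ContinuousOn f (Icc a b))
    (hf' : ∀ x ∈ Ioo a b, HasDerivAt f (f' x) x) (hpos : ∀ x ∈ Ioo a b, 0 < f' x)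
    (g : ℝ → ℝ≥0∞) :
    ∫⁻ y in Ioo (f a) (f b), g y = ∫⁻ x in Ioo a b, ENNReal.ofReal (f' x) * g (f x) := by
  have hmono := strictMonoOn_Icc_of_hasDerivAt_pos hf hf' hpos
  rw [← hf.image_Ioo_of_strictMonoOn hab hmono,
    lintegral_image_eq_lintegral_abs_deriv_mul measurableSet_Ioo
      (fun x hx => (hf' x hx).hasDerivWithinAt) (hmono.injOn.mono Ioo_subset_Icc_self)]
  exact setLIntegral_congr_fun measurableSet_Ioo fun x hx => by rw [abs_of_pos (hpos x hx)]

theorem lintegral_Ioo_comp_of_deriv_neg (hab : a ≤ b) (hf : ContinuousOn f (Icc a b))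
    (hf' : ∀ x ∈ Ioo a b, HasDerivAt f (f' x) x) (hneg : ∀ x ∈ Ioo a b, f' x < 0)
    (g : ℝ → ℝ≥0∞) :
    ∫⁻ y in Ioo (f b) (f a), g y = ∫⁻ x in Ioo a b, ENNReal.ofReal (-f' x) * g (f x) := by
  have hanti := strictAntiOn_Icc_of_hasDerivAt_neg hf hf' hneg
  rw [← hf.image_Ioo_of_strictAntiOn hab hanti,
    lintegral_image_eq_lintegral_abs_deriv_mul measurableSet_Ioo
      (fun x hx => (hf' x hx).hasDerivWithinAt) (hanti.injOn.mono Ioo_subset_Icc_self)]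
  exact setLIntegral_congr_fun measurableSet_Ioo fun x hx => by rw [abs_of_neg (hneg x hx)]

end ChangeOfVariables

noncomputable def ellKIntegrand (k u : ℝ) : ℝ := 1 / √((1 - u ^ 2) * (1 - k ^ 2 * u ^ 2))

theorem EllK_eq_setIntegral_Ioo (k : ℝ) : EllK k = ∫ u in Ioo 0 1, ellKIntegrand k u := by
  rw [EllK, intervalIntegral.integral_of_le zero_le_one, integral_Ioc_eq_integral_Ioo]
  rfl

theorem EllK_nonneg (k : ℝ) : 0 ≤ EllK k :=
  intervalIntegral.integral_nonneg zero_le_one fun _ _ => by positivity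

@[fun_prop]
theorem measurable_EllK : Measurable EllK := by
  have h : StronglyMeasurable (Function.uncurry ellKIntegrand) := by
    unfold ellKIntegrand
    exact Measurable.stronglyMeasurable (by fun_prop)
  rw [show EllK = fun k => ∫ u in Ioo 0 1, ellKIntegrand k u from funext EllK_eq_setIntegral_Ioo]
  exact (h.integral_prod_right' (ν := volume.restrict (Ioo 0 1))).measurable

@[fun_prop]
theorem measurable_EllK' : Measurable EllK' := by unfold EllK'; fun_prop

-- Landen's substitution `u = (1 + s) v / (1 + s v²)`, where `m = 2√s / (1 + s)`.
theorem ellKIntegrand_landen {s m v : ℝ} (hs0 : 0 ≤ s) (hs1 : s ≤ 1)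
    (hm : m ^ 2 = 4 * s / (1 + s) ^ 2) (hv : v ^ 2 < 1) :
    (1 + s) * (1 - s * v ^ 2) / (1 + s * v ^ 2) ^ 2 *
        ellKIntegrand m ((1 + s) * v / (1 + s * v ^ 2)) = (1 + s) * ellKIntegrand s v := by
  have hsv : 0 < 1 - s * v ^ 2 := by nlinarith
  have hX : 0 < (1 - v ^ 2) * (1 - s ^ 2 * v ^ 2) :=
    mul_pos (by linarith) (by nlinarith [mul_le_mul_of_nonneg_left hs1 hs0])
  have hD : 0 < 1 + s * v ^ 2 := by positivity
  have hc : 0 < (1 - s * v ^ 2) / (1 + s * v ^ 2) ^ 2 := by positivity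
  have hfactor : (1 - ((1 + s) * v / (1 + s * v ^ 2)) ^ 2) *
      (1 - m ^ 2 * ((1 + s) * v / (1 + s * v ^ 2)) ^ 2) =
      (1 - v ^ 2) * (1 - s ^ 2 * v ^ 2) * ((1 - s * v ^ 2) / (1 + s * v ^ 2) ^ 2) ^ 2 := by
    rw [hm]
    field_simp
    ring
  unfold ellKIntegrand
  rw [hfactor, sqrt_mul hX.le, sqrt_sq hc.le]
  have := sqrt_pos.2 hX
  field_simp

theorem EllK_landen {s m : ℝ} (hs0 : 0 ≤ s) (hs1 : s ≤ 1) (hm : m ^ 2 = 4 * s / (1 + s) ^ 2) :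
    EllK m = (1 + s) * EllK s := by
  have hD : ∀ v : ℝ, 0 < 1 + s * v ^ 2 := fun v => by positivity
  have hderiv : ∀ v ∈ Ioo (0 : ℝ) 1, HasDerivAt (fun v => (1 + s) * v / (1 + s * v ^ 2))
      ((1 + s) * (1 - s * v ^ 2) / (1 + s * v ^ 2) ^ 2) v := fun v _ => by
    refine (((hasDerivAt_id' v).const_mul (1 + s)).div
      (((hasDerivAt_pow 2 v).const_mul s).const_add 1) (hD v).ne').congr_deriv ?_
    ring
  have hpos : ∀ v ∈ Ioo (0 : ℝ) 1, 0 < (1 + s) * (1 - s * v ^ 2) / (1 + s * v ^ 2) ^ 2 :=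
    fun v hv => div_pos (mul_pos (by linarith) (by nlinarith [hv.1, hv.2])) (by positivity)
  have hcont : ContinuousOn (fun v => (1 + s) * v / (1 + s * v ^ 2)) (Icc 0 1) :=
    (by fun_prop : Continuous fun v : ℝ => (1 + s) * v).continuousOn.div (by fun_prop)
      fun v _ => (hD v).ne'
  have h := setIntegral_Ioo_comp_of_deriv_pos zero_le_one hcont hderiv hpos (ellKIntegrand m)
  have h1 : (1 + s) * 1 / (1 + s * 1 ^ 2) = 1 := by field_simp
  simp only [mul_zero, zero_div, h1] at h
  rw [EllK_eq_setIntegral_Ioo, EllK_eq_setIntegral_Ioo, h, ← integral_const_mul]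
  exact setIntegral_congr_fun measurableSet_Ioo fun v hv =>
    ellKIntegrand_landen hs0 hs1 hm (by nlinarith [hv.1, hv.2])

theorem hasDerivAt_sqrt_one_sub_sq {k : ℝ} (hk : k ^ 2 < 1) :
    HasDerivAt (fun x => √(1 - x ^ 2)) (-k / √(1 - k ^ 2)) k := by
  refine (((hasDerivAt_pow 2 k).const_sub 1).sqrt (by linarith)).congr_deriv ?_
  have := sqrt_pos.2 (sub_pos.2 hk)
  field_simp
  ring

theorem lintegral_EllK_cube :
    ∫⁻ k in Ioo 0 1, ENNReal.ofReal (EllK k ^ 3) =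
      ∫⁻ k in Ioo 0 1, ENNReal.ofReal (k / √(1 - k ^ 2) * EllK' k ^ 3) := by
  have hk2 : ∀ k ∈ Ioo (0 : ℝ) 1, k ^ 2 < 1 :=
    fun k hk => pow_lt_one₀ hk.1.le hk.2 two_ne_zero
  have h := lintegral_Ioo_comp_of_deriv_neg zero_le_one (f := fun x => √(1 - x ^ 2)) (by fun_prop)
    (fun k hk => hasDerivAt_sqrt_one_sub_sq (hk2 k hk))
    (fun k hk => div_neg_of_neg_of_pos (neg_neg_of_pos hk.1) (sqrt_pos.2 (by linarith [hk2 k hk])))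
    (fun y => ENNReal.ofReal (EllK y ^ 3))
  norm_num at h
  rw [h]
  refine setLIntegral_congr_fun measurableSet_Ioo fun k hk => ?_
  rw [neg_div, neg_neg, ← ENNReal.ofReal_mul (div_nonneg hk.1.le (sqrt_nonneg _))]
  rfl

noncomputable def landenMap (k : ℝ) : ℝ := (1 - √(1 - k ^ 2)) / (1 + √(1 - k ^ 2))

theorem EllK'_landenMap (k : ℝ) : EllK' (landenMap k) = (1 + √(1 - k ^ 2)) * EllK' k := by
  set κ := √(1 - k ^ 2)
  have hκ0 : 0 ≤ κ := sqrt_nonneg _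
  have hκ1 : κ ≤ 1 := sqrt_le_one.2 (by nlinarith)
  have hsq : 1 - landenMap k ^ 2 = 4 * κ / (1 + κ) ^ 2 := by
    unfold landenMap
    field_simp
    ring
  refine EllK_landen hκ0 hκ1 ?_
  rw [sq_sqrt (by rw [hsq]; positivity), hsq]

theorem landenMap_nonneg (k : ℝ) : 0 ≤ landenMap k :=
  div_nonneg (sub_nonneg.2 (sqrt_le_one.2 (by nlinarith))) (by positivity)

theorem lintegral_Ioo_comp_landenMap (g : ℝ → ℝ≥0∞) :
    ∫⁻ y in Ioo 0 1, g y = ∫⁻ k in Ioo 0 1,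
      ENNReal.ofReal (2 * k / (√(1 - k ^ 2) * (1 + √(1 - k ^ 2)) ^ 2)) * g (landenMap k) := by
  have hcont : Continuous landenMap :=
    (by fun_prop : Continuous fun k : ℝ => 1 - √(1 - k ^ 2)).div (by fun_prop)
      fun _ => by positivity
  have h := lintegral_Ioo_comp_of_deriv_pos zero_le_one hcont.continuousOn
    (f' := fun k => 2 * k / (√(1 - k ^ 2) * (1 + √(1 - k ^ 2)) ^ 2)) (fun k hk => ?_)
    (fun k hk => ?_) g
  · simpa [landenMap] using h
  · have hk2 : k ^ 2 < 1 := pow_lt_one₀ hk.1.le hk.2 two_ne_zero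
    have hκ := hasDerivAt_sqrt_one_sub_sq hk2
    have := sqrt_pos.2 (sub_pos.2 hk2)
    refine ((hκ.const_sub 1).div (hκ.const_add 1) (by positivity)).congr_deriv ?_
    field_simp
    ring
  · have := sqrt_pos.2 (sub_pos.2 (pow_lt_one₀ hk.1.le hk.2 two_ne_zero))
    have := hk.1
    positivity

theorem lintegral_EllK'_cube :
    ∫⁻ k in Ioo 0 1, ENNReal.ofReal (EllK' k ^ 3) =
      2 * (∫⁻ k in Ioo 0 1, ENNReal.ofReal (k / √(1 - k ^ 2) * EllK' k ^ 3)) +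
        2 * ∫⁻ k in Ioo 0 1, ENNReal.ofReal (k * EllK' k ^ 3) := by
  calc _ = ∫⁻ k in Ioo 0 1, (2 * ENNReal.ofReal (k / √(1 - k ^ 2) * EllK' k ^ 3) +
        2 * ENNReal.ofReal (k * EllK' k ^ 3)) := by
        rw [lintegral_Ioo_comp_landenMap]
        refine setLIntegral_congr_fun measurableSet_Ioo fun k hk => ?_
        have := sqrt_pos.2 (sub_pos.2 (pow_lt_one₀ hk.1.le hk.2 two_ne_zero))
        have := hk.1
        have hK : 0 ≤ EllK' k := EllK_nonneg _
        have key : 2 * k / (√(1 - k ^ 2) * (1 + √(1 - k ^ 2)) ^ 2) * EllK' (landenMap k) ^ 3 =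
            2 * (k / √(1 - k ^ 2) * EllK' k ^ 3) + 2 * (k * EllK' k ^ 3) := by
          rw [EllK'_landenMap]
          field_simp
        rw [← ENNReal.ofReal_mul (by positivity), key,
          ENNReal.ofReal_add (by positivity) (by positivity), ENNReal.ofReal_mul zero_le_two,
          ENNReal.ofReal_mul zero_le_two, ENNReal.ofReal_ofNat]
    _ = _ := by
        rw [lintegral_add_right _ (by fun_prop), lintegral_const_mul' _ _ ENNReal.ofNat_ne_top,
          lintegral_const_mul' _ _ ENNReal.ofNat_ne_top]

theorem three_mul_lintegral_mul_EllK'_cube :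
    3 * ∫⁻ k in Ioo 0 1, ENNReal.ofReal (k * EllK' k ^ 3) =
      2 * ∫⁻ k in Ioo 0 1, ENNReal.ofReal (k / √(1 - k ^ 2) * EllK' k ^ 3) := by
  calc _ = (∫⁻ k in Ioo 0 1, ENNReal.ofReal (k * EllK' k ^ 3)) +
        2 * ∫⁻ k in Ioo 0 1, ENNReal.ofReal (k * EllK' k ^ 3) := by ring
    _ = ∫⁻ k in Ioo 0 1, (ENNReal.ofReal (2 * k / (√(1 - k ^ 2) * (1 + √(1 - k ^ 2)) ^ 2)) *
          ENNReal.ofReal (landenMap k * EllK' (landenMap k) ^ 3) +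
            2 * ENNReal.ofReal (k * EllK' k ^ 3)) := by
        rw [lintegral_add_right _ (by fun_prop), lintegral_const_mul' _ _ ENNReal.ofNat_ne_top,
          lintegral_Ioo_comp_landenMap fun y => ENNReal.ofReal (y * EllK' y ^ 3)]
    _ = ∫⁻ k in Ioo 0 1, 2 * ENNReal.ofReal (k / √(1 - k ^ 2) * EllK' k ^ 3) := by
        refine setLIntegral_congr_fun measurableSet_Ioo fun k hk => ?_
        have := sqrt_pos.2 (sub_pos.2 (pow_lt_one₀ hk.1.le hk.2 two_ne_zero))
        have := hk.1
        have := landenMap_nonneg k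
        have hK : 0 ≤ EllK' k := EllK_nonneg _
        have hK' : 0 ≤ EllK' (landenMap k) := EllK_nonneg _
        have key : 2 * k / (√(1 - k ^ 2) * (1 + √(1 - k ^ 2)) ^ 2) *
            (landenMap k * EllK' (landenMap k) ^ 3) + 2 * (k * EllK' k ^ 3) =
              2 * (k / √(1 - k ^ 2) * EllK' k ^ 3) := by
          rw [EllK'_landenMap, landenMap]
          field_simp
          ring
        rw [← ENNReal.ofReal_mul (by positivity), ← ENNReal.ofReal_ofNat 2,
          ← ENNReal.ofReal_mul zero_le_two,
          ← ENNReal.ofReal_add (by positivity) (by positivity), key,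
          ENNReal.ofReal_mul zero_le_two]
    _ = _ := lintegral_const_mul' _ _ ENNReal.ofNat_ne_top

theorem three_mul_lintegral_EllK'_cube :
    3 * ∫⁻ k in Ioo 0 1, ENNReal.ofReal (EllK' k ^ 3) =
      10 * ∫⁻ k in Ioo 0 1, ENNReal.ofReal (EllK k ^ 3) := by
  rw [lintegral_EllK'_cube, lintegral_EllK_cube]
  calc _ = 6 * (∫⁻ k in Ioo 0 1, ENNReal.ofReal (k / √(1 - k ^ 2) * EllK' k ^ 3)) +
        2 * (3 * ∫⁻ k in Ioo 0 1, ENNReal.ofReal (k * EllK' k ^ 3)) := by ring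
    _ = _ := by rw [three_mul_lintegral_mul_EllK'_cube]; ring

theorem intervalIntegral_eq_toReal_lintegral_Ioo {f : ℝ → ℝ} {a b : ℝ} (hab : a ≤ b)
    (hf : Measurable f) (hnn : 0 ≤ f) :
    ∫ x in a..b, f x = (∫⁻ x in Ioo a b, ENNReal.ofReal (f x)).toReal := by
  rw [intervalIntegral.integral_of_le hab, integral_Ioc_eq_integral_Ioo,
    integral_eq_lintegral_of_nonneg_ae (Filter.Eventually.of_forall hnn) hf.aestronglyMeasurable]

theorem stmt1 :
    ∫ k in (0:ℝ)..1, (EllK' k)^3 = (10/3) * ∫ k in (0:ℝ)..1, (EllK k)^3 := by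
  rw [intervalIntegral_eq_toReal_lintegral_Ioo (f := fun k => EllK' k ^ 3) zero_le_one
      (by fun_prop) fun k => pow_nonneg (EllK_nonneg _) 3,
    intervalIntegral_eq_toReal_lintegral_Ioo (f := fun k => EllK k ^ 3) zero_le_one
      (by fun_prop) fun k => pow_nonneg (EllK_nonneg _) 3]
  have h := congrArg ENNReal.toReal three_mul_lintegral_EllK'_cube
  simp only [ENNReal.toReal_mul, ENNReal.toReal_ofNat] at h
  linarith
end

section
/- The complete elliptic integral of the first kind at the first singular value satisfies K(1/√2) = Γ(1/4)²/(4√π). -/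
open MeasureTheory Set Real

/-!
The substitution `u = √(1 - t²)` turns `K(k)` into `∫₀¹ dt / √((1 - t²)(1 - k² + k² t²))`, which
for `k² = 1/2` is `√2 ∫₀¹ dt / √(1 - t⁴)`. The substitution `t = x^(1/4)` makes the latter a Beta
integral, `B(1/4, 1/2) / 4 = √π Γ(1/4) / (4 Γ(3/4))`, and the reflection formula
`Γ(1/4) Γ(3/4) = π / sin(π/4) = √2 π` gives the closed form.
-/

theorem integral_Icc_rpow_mul_one_sub_rpow {a b : ℝ} (ha : 0 < a) (hb : 0 < b) :
    ∫ x in Icc (0 : ℝ) 1, x ^ (a - 1) * (1 - x) ^ (b - 1) = Gamma a * Gamma b / Gamma (a + b) := by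
  have hβ : Complex.betaIntegral a b = ((Gamma a * Gamma b / Gamma (a + b) : ℝ) : ℂ) := by
    rw [Complex.betaIntegral_eq_Gamma_mul_div _ _ (by simpa) (by simpa), ← Complex.ofReal_add]
    simp only [Complex.Gamma_ofReal]
    norm_cast
  rw [Complex.betaIntegral, intervalIntegral.integral_of_le zero_le_one,
    ← integral_Icc_eq_integral_Ioc] at hβ
  have hcast : ∫ x in Icc (0 : ℝ) 1, ((x ^ (a - 1) * (1 - x) ^ (b - 1) : ℝ) : ℂ)
      = ∫ x in Icc (0 : ℝ) 1, (x : ℂ) ^ ((a : ℂ) - 1) * (1 - (x : ℂ)) ^ ((b : ℂ) - 1) := by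
    refine setIntegral_congr_fun measurableSet_Icc fun x hx ↦ ?_
    rw [Complex.ofReal_mul, Complex.ofReal_cpow hx.1, Complex.ofReal_cpow (sub_nonneg.2 hx.2)]
    push_cast
    rfl
  exact Complex.ofReal_injective (integral_ofReal.symm.trans (hcast.trans hβ))

theorem integral_Icc_comp_rpow_inv {p : ℝ} (hp : 0 < p) (g : ℝ → ℝ) :
    ∫ x in Icc (0 : ℝ) 1, p⁻¹ * x ^ (p⁻¹ - 1) * g (x ^ p⁻¹) = ∫ t in Icc (0 : ℝ) 1, g t := by
  have hp' : p⁻¹ ≠ 0 := inv_ne_zero hp.ne'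
  have hsubst := integral_Icc_deriv_smul_of_deriv_nonneg (g := g) (f := fun x : ℝ ↦ x ^ p⁻¹)
    (f' := fun x ↦ p⁻¹ * x ^ (p⁻¹ - 1))
    (continuousOn_id.rpow_const fun _ _ ↦ Or.inr (inv_pos.2 hp).le)
    (fun x hx ↦ by simpa [mul_comm] using (hasDerivAt_rpow_const (p := p⁻¹) (Or.inl hx.1.ne')))
    (fun x hx ↦ by have hx0 := hx.1; positivity) zero_le_one
  simpa [zero_rpow hp'] using hsubst

theorem integral_Icc_comp_sqrt_one_sub_sq (g : ℝ → ℝ) :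
    ∫ t in Icc (0 : ℝ) 1, t / √(1 - t ^ 2) * g √(1 - t ^ 2) = ∫ u in Icc (0 : ℝ) 1, g u := by
  have hsubst := integral_Icc_deriv_smul_of_deriv_nonpos (g := g) (f := fun t : ℝ ↦ √(1 - t ^ 2))
    (f' := fun t ↦ -(t / √(1 - t ^ 2))) (by fun_prop)
    (fun t ht ↦ by
      have h : 1 - t ^ 2 ≠ 0 := by nlinarith [ht.1, ht.2]
      convert ((hasDerivAt_pow 2 t).const_sub 1).sqrt h using 1
      field_simp
      ring)
    (fun t ht ↦ by have ht0 := ht.1; simp only [neg_nonpos]; positivity) zero_le_one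
  simpa [integral_neg] using hsubst

theorem integral_Icc_one_div_sqrt_one_sub_rpow {p : ℝ} (hp : 0 < p) :
    ∫ t in Icc (0 : ℝ) 1, 1 / √(1 - t ^ p) = √π * Gamma p⁻¹ / (p * Gamma (p⁻¹ + 1 / 2)) := by
  rw [← integral_Icc_comp_rpow_inv hp]
  have hbeta : ∀ x ∈ Icc (0 : ℝ) 1, p⁻¹ * x ^ (p⁻¹ - 1) * (1 / √(1 - (x ^ p⁻¹) ^ p))
      = p⁻¹ * (x ^ (p⁻¹ - 1) * (1 - x) ^ (1 / 2 - 1 : ℝ)) := fun x hx ↦ by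
    rw [rpow_inv_rpow hx.1 hp.ne', sqrt_eq_rpow, show (1 / 2 - 1 : ℝ) = -(1 / 2) by norm_num,
      rpow_neg (sub_nonneg.2 hx.2), one_div (_ ^ _), mul_assoc]
  rw [setIntegral_congr_fun measurableSet_Icc hbeta, integral_const_mul,
    integral_Icc_rpow_mul_one_sub_rpow (inv_pos.2 hp) one_half_pos, Gamma_one_half_eq]
  field_simp

theorem EllK_eq_integral_Icc (k : ℝ) :
    EllK k = ∫ t in Icc (0 : ℝ) 1, 1 / √((1 - t ^ 2) * (1 - k ^ 2 + k ^ 2 * t ^ 2)) := by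
  rw [EllK, intervalIntegral.integral_of_le zero_le_one, ← integral_Icc_eq_integral_Ioc,
    ← integral_Icc_comp_sqrt_one_sub_sq, integral_Icc_eq_integral_Ioo, integral_Icc_eq_integral_Ioo]
  -- the integrands differ at `t = 0`, where the substituted one vanishes
  refine setIntegral_congr_fun measurableSet_Ioo fun t ht ↦ ?_
  have h : 0 ≤ 1 - t ^ 2 := by nlinarith [ht.1, ht.2]
  rw [sq_sqrt h, show (1 - (1 - t ^ 2)) * (1 - k ^ 2 * (1 - t ^ 2))
      = t ^ 2 * (1 - k ^ 2 + k ^ 2 * t ^ 2) by ring, sqrt_mul (sq_nonneg t), sqrt_sq ht.1.le,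
    sqrt_mul h]
  have ht0 := ht.1
  field_simp

theorem EllK_one_div_sqrt_two : EllK (1 / √2) = √2 * ∫ t in Icc (0 : ℝ) 1, 1 / √(1 - t ^ 4) := by
  rw [EllK_eq_integral_Icc, ← integral_const_mul]
  refine setIntegral_congr_fun measurableSet_Icc fun t _ ↦ ?_
  rw [div_pow, sq_sqrt zero_le_two, show (1 - t ^ 2) * (1 - 1 ^ 2 / 2 + 1 ^ 2 / 2 * t ^ 2)
      = (1 - t ^ 4) / 2 by ring, sqrt_div' _ zero_le_two, one_div_div, mul_one_div]

theorem Gamma_one_fourth_mul_Gamma_three_fourths : Gamma (1 / 4) * Gamma (3 / 4) = √2 * π := by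
  have h := Gamma_mul_Gamma_one_sub (1 / 4)
  rw [show (1 : ℝ) - 1 / 4 = 3 / 4 by norm_num, show π * (1 / 4) = π / 4 by ring,
    sin_pi_div_four] at h
  rw [h, div_div_eq_mul_div, div_eq_iff (by positivity)]
  ring_nf
  rw [sq_sqrt zero_le_two]

theorem stmt9 :
    EllK (1 / Real.sqrt 2) = (Real.Gamma (1/4))^2 / (4 * Real.sqrt Real.pi) := by
  have hquartic := integral_Icc_one_div_sqrt_one_sub_rpow (p := 4) four_pos
  rw [show (4 : ℝ)⁻¹ = 1 / 4 by norm_num, show (1 / 4 + 1 / 2 : ℝ) = 3 / 4 by norm_num] at hquartic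
  simp only [rpow_ofNat] at hquartic
  rw [EllK_one_div_sqrt_two, hquartic]
  field_simp
  rw [sq_sqrt pi_pos.le, Gamma_one_fourth_mul_Gamma_three_fourths]
end
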